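/- Let p ≥ 0 be an integer, let n* > 0 with n* ≠ 1, and let κ* ≠ 0 be a complex number such that J_p(κ*) = 0, J_p(√n*·κ*) = 0, J_p'(κ*) ≠ 0 and J_p'(√n*·κ*) ≠ 0. Then κ* is a zero of order exactly 3 of the entire function κ ↦ F_p(κ, n*): F_p(κ*, n*) = 0, the first and second derivatives of κ ↦ F_p(κ, n*) vanish at κ*, and its third derivative at κ* equals 2·(n* − 1)·√n*·κ*·J_p'(κ*)·J_p'(√n*·κ*) ≠ 0. -/

import Mathlib

open Complex Real Filter Set

/-- Bessel function of the first kind of integer order `p`. -/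
noncomputable def besselJ (p : ℕ) (z : ℂ) : ℂ :=
  ∑' m : ℕ, ((-1 : ℂ) ^ m / ((Nat.factorial m : ℂ) * (Nat.factorial (m + p) : ℂ)))
    * (z / 2) ^ (2 * m + p)

/-- Derivative of the Bessel function. -/
noncomputable def besselJ' (p : ℕ) (z : ℂ) : ℂ := deriv (besselJ p) z

/-- The ITE determinant function `F_p(κ, n)`. -/
noncomputable def Fp (p : ℕ) (κ : ℂ) (n : ℝ) : ℂ :=
  κ * (besselJ' p κ * besselJ p ((Real.sqrt n : ℂ) * κ)
    - (Real.sqrt n : ℂ) * besselJ p κ * besselJ' p ((Real.sqrt n : ℂ) * κ))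

/-!
Put `u = J_p` and `v(κ) = J_p(√n κ)`, so that `F_p(κ, n) = κ (u' v - u v')`. Both `u` and `v`
solve Bessel's equation, `v` with `κ²` scaled by `n`, and eliminating `u''` and `v''` with it
gives the Lommel-type identity `∂_κ F_p(κ, n) = (n - 1) κ u(κ) v(κ)`. At a common zero `κ*` of
`u` and `v` the product `(n - 1) κ u · v` vanishes to order two, with second derivative
`2 (n - 1) κ* u'(κ*) v'(κ*)`.
-/

open scoped Nat

noncomputable def besselCoeff (p m : ℕ) : ℂ := (-1) ^ m / (m ! * (m + p)! : ℂ)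

/-- The `j`-th derivative of the term `besselCoeff p m * (z / 2) ^ (2 * m + p)` of `besselJ p`;
the truncated exponent is harmless, as the descending factorial vanishes for `j > 2 * m + p`. -/
noncomputable def besselTerm (p j m : ℕ) (z : ℂ) : ℂ :=
  besselCoeff p m * (2 * m + p).descFactorial j / 2 ^ j * (z / 2) ^ (2 * m + p - j)

noncomputable def besselSeries (p j : ℕ) (z : ℂ) : ℂ := ∑' m, besselTerm p j m z

lemma hasDerivAt_besselTerm (p j m : ℕ) (z : ℂ) :
    HasDerivAt (besselTerm p j m) (besselTerm p (j + 1) m z) z := by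
  have h : HasDerivAt (fun w : ℂ => (w / 2) ^ (2 * m + p - j))
      ((2 * m + p - j : ℕ) * (z / 2) ^ (2 * m + p - j - 1) * (1 / 2)) z :=
    ((hasDerivAt_id' z).div_const 2).pow _
  refine (h.const_mul (besselCoeff p m * (2 * m + p).descFactorial j / 2 ^ j)).congr_deriv ?_
  rw [besselTerm, Nat.descFactorial_succ, ← Nat.sub_sub]
  push_cast
  ring

lemma norm_besselTerm_le (p j m : ℕ) {R : ℝ} (hR : 2 ≤ R) {w : ℂ} (hw : ‖w‖ ≤ R) :
    ‖besselTerm p j m w‖ ≤ j ! * R ^ (2 * m + p) / m ! := by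
  set k := 2 * m + p
  have hdesc : (k.descFactorial j : ℝ) ≤ j ! * 2 ^ k := by
    rw [Nat.descFactorial_eq_factorial_mul_choose]
    exact_mod_cast Nat.mul_le_mul_left _ (Nat.choose_le_two_pow k j)
  have hpow : (‖w‖ / 2) ^ (k - j) ≤ (R / 2) ^ k :=
    (pow_le_pow_left₀ (by positivity) (by linarith) _).trans
      (pow_le_pow_right₀ (by linarith) (Nat.sub_le k j))
  have hden : (m ! : ℝ) ≤ m ! * (m + p)! * 2 ^ j := by
    have : (1 : ℝ) ≤ (m + p)! * 2 ^ j :=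
      one_le_mul_of_one_le_of_one_le (by exact_mod_cast (m + p).factorial_pos)
        (one_le_pow₀ one_le_two)
    nlinarith [(m.factorial_pos : 0 < m !)]
  calc ‖besselTerm p j m w‖
      = k.descFactorial j / (m ! * (m + p)! * 2 ^ j) * (‖w‖ / 2) ^ (k - j) := by
        simp only [besselTerm, besselCoeff, norm_mul, norm_div, norm_pow, norm_neg, norm_one,
          one_pow, Complex.norm_natCast, Complex.norm_two, k]
        ring
    _ ≤ j ! * 2 ^ k / m ! * (R / 2) ^ k := by gcongr
    _ = j ! * R ^ k / m ! := by
        rw [div_pow]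
        field_simp

lemma summable_mul_pow_two_mul_add_div_factorial (C R : ℝ) (p : ℕ) :
    Summable fun m : ℕ => C * R ^ (2 * m + p) / m ! := by
  refine ((Real.summable_pow_div_factorial (R ^ 2)).mul_left (C * R ^ p)).congr fun m => ?_
  ring

lemma summable_besselTerm (p j : ℕ) (z : ℂ) : Summable fun m => besselTerm p j m z :=
  .of_norm_bounded (summable_mul_pow_two_mul_add_div_factorial (j !) (2 + ‖z‖) p)
    fun m => norm_besselTerm_le p j m (by simp) (by simp)

lemma hasDerivAt_besselSeries (p j : ℕ) (z : ℂ) :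
    HasDerivAt (besselSeries p j) (besselSeries p (j + 1) z) z := by
  set R := 2 + ‖z‖
  have hz : z ∈ Metric.ball (0 : ℂ) R := by simp [R]
  have hdiff (m : ℕ) : DifferentiableOn ℂ (besselTerm p j m) (Metric.ball 0 R) :=
    fun w _ => (hasDerivAt_besselTerm p j m w).differentiableAt.differentiableWithinAt
  have hbound (m : ℕ) (w : ℂ) (hw : w ∈ Metric.ball (0 : ℂ) R) :
      ‖besselTerm p j m w‖ ≤ j ! * R ^ (2 * m + p) / m ! :=
    norm_besselTerm_le p j m (by simp [R]) (mem_ball_zero_iff.mp hw).le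
  have hsum := summable_mul_pow_two_mul_add_div_factorial (j !) R p
  have hderiv := Complex.hasSum_deriv_of_summable_norm hsum hdiff Metric.isOpen_ball hbound hz
  simp only [fun m => (hasDerivAt_besselTerm p j m z).deriv] at hderiv
  have hdiffOn :=
    Complex.differentiableOn_tsum_of_summable_norm hsum hdiff Metric.isOpen_ball hbound
  rw [besselSeries, hderiv.tsum_eq]
  exact (hdiffOn.differentiableAt (Metric.isOpen_ball.mem_nhds hz)).hasDerivAt

lemma pow_mul_besselTerm (p j m : ℕ) (z : ℂ) :
    z ^ j * besselTerm p j m z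
      = (2 * m + p).descFactorial j * (besselCoeff p m * (z / 2) ^ (2 * m + p)) := by
  rcases le_or_gt j (2 * m + p) with hj | hj
  · have hz : z ^ j = 2 ^ j * (z / 2) ^ j := by rw [← mul_pow, mul_div_cancel₀ _ two_ne_zero]
    rw [besselTerm, hz, ← pow_sub_mul_pow (z / 2) hj]
    field_simp
  · simp [besselTerm, Nat.descFactorial_eq_zero_iff_lt.mpr hj]

lemma besselCoeff_succ (p m : ℕ) :
    ((m : ℂ) + 1) * (m + 1 + p) * besselCoeff p (m + 1) = -besselCoeff p m := by
  rw [besselCoeff, besselCoeff, Nat.factorial_succ, show m + 1 + p = m + p + 1 by ring,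
    Nat.factorial_succ]
  have : ((m + p)! : ℂ) ≠ 0 := by exact_mod_cast (m + p).factorial_ne_zero
  have : (m ! : ℂ) ≠ 0 := by exact_mod_cast m.factorial_ne_zero
  have : (m : ℂ) + p + 1 ≠ 0 := by exact_mod_cast Nat.succ_ne_zero (m + p)
  push_cast
  field_simp
  ring

lemma besselSeries_ode (p : ℕ) (z : ℂ) :
    z ^ 2 * besselSeries p 2 z + z * besselSeries p 1 z + (z ^ 2 - p ^ 2) * besselSeries p 0 z
      = 0 := by
  -- Termwise, `z²∂² + z∂ - p²` multiplies the `m`-th term by `(2m + p)² - p² = 4m(m + p)`, which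
  -- by `besselCoeff_succ` turns it into the `(m - 1)`-st term of `-z² J_p`.
  set g : ℕ → ℂ := fun m => 4 * m * (m + p) * (besselCoeff p m * (z / 2) ^ (2 * m + p))
  have hg (m : ℕ) : z ^ 2 * besselTerm p 2 m z + z * besselTerm p 1 m z
      - p ^ 2 * besselTerm p 0 m z = g m := by
    have h2 := pow_mul_besselTerm p 2 m z
    have h1 := pow_mul_besselTerm p 1 m z
    have h0 := pow_mul_besselTerm p 0 m z
    rw [Nat.cast_descFactorial_two] at h2
    simp only [pow_one, pow_zero, one_mul, Nat.descFactorial_one, Nat.descFactorial_zero] at h1 h0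
    push_cast at h1 h2 h0
    linear_combination h2 + h1 - (p : ℂ) ^ 2 * h0
  have hg_succ (m : ℕ) : g (m + 1) = -z ^ 2 * besselTerm p 0 m z := by
    have h0 := pow_mul_besselTerm p 0 m z
    simp only [pow_zero, one_mul, Nat.descFactorial_zero, Nat.cast_one] at h0
    simp only [g, h0]
    rw [show 2 * (m + 1) + p = 2 * m + p + 2 by ring, pow_add]
    push_cast
    linear_combination (z ^ 2 * (z / 2) ^ (2 * m + p)) * besselCoeff_succ p m
  have hsum (j : ℕ) : HasSum (fun m => besselTerm p j m z) (besselSeries p j z) :=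
    (summable_besselTerm p j z).hasSum
  have hg_sum : HasSum g (z ^ 2 * besselSeries p 2 z + z * besselSeries p 1 z
      - p ^ 2 * besselSeries p 0 z) := by
    have h := (((hsum 2).mul_left (z ^ 2)).add ((hsum 1).mul_left z)).sub
      ((hsum 0).mul_left ((p : ℂ) ^ 2))
    rwa [funext hg] at h
  have hg_sum' : HasSum g (-z ^ 2 * besselSeries p 0 z) := by
    rw [← hasSum_nat_add_iff' 1]
    simpa [hg_succ, g] using (hsum 0).mul_left (-z ^ 2)
  linear_combination hg_sum.unique hg_sum'

lemma besselJ_eq_besselSeries (p : ℕ) : besselJ p = besselSeries p 0 := by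
  funext z
  simp [besselJ, besselSeries, besselTerm, besselCoeff]

lemma deriv_besselSeries (p j : ℕ) : deriv (besselSeries p j) = besselSeries p (j + 1) :=
  funext fun z => (hasDerivAt_besselSeries p j z).deriv

lemma differentiable_besselJ (p : ℕ) : Differentiable ℂ (besselJ p) := by
  rw [besselJ_eq_besselSeries]
  exact fun z => (hasDerivAt_besselSeries p 0 z).differentiableAt

def IsBesselSolution (a c : ℂ) (u : ℂ → ℂ) : Prop :=
  ∀ z, z ^ 2 * deriv (deriv u) z + z * deriv u z + (a * z ^ 2 - c) * u z = 0

lemma isBesselSolution_besselJ (p : ℕ) : IsBesselSolution 1 (p ^ 2) (besselJ p) := fun z => by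
  simpa only [besselJ_eq_besselSeries, deriv_besselSeries, one_mul] using besselSeries_ode p z

lemma IsBesselSolution.comp_mul_left {a c : ℂ} {u : ℂ → ℂ} (hu : IsBesselSolution a c u)
    (s : ℂ) : IsBesselSolution (s ^ 2 * a) c fun w => u (s * w) := fun z => by
  have h (f : ℂ → ℂ) : deriv (fun w => f (s * w)) = fun w => s * deriv f (s * w) :=
    funext fun w => deriv_comp_mul_left s f w
  rw [h, deriv_const_mul_field', h]
  linear_combination hu (s * z)

theorem deriv_mul_wronskian_of_isBesselSolution {a b c : ℂ} {u v : ℂ → ℂ}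
    (hu : Differentiable ℂ u) (hv : Differentiable ℂ v)
    (hu_sol : IsBesselSolution a c u) (hv_sol : IsBesselSolution b c v) :
    deriv (fun z => z * (deriv u z * v z - u z * deriv v z))
      = fun z => (b - a) * z * u z * v z := by
  have hu' := hu.deriv
  have hv' := hv.deriv
  have hF (z : ℂ) : HasDerivAt (fun z => z * (deriv u z * v z - u z * deriv v z))
      (deriv u z * v z - u z * deriv v z
        + z * (deriv (deriv u) z * v z - u z * deriv (deriv v) z)) z := by
    refine ((hasDerivAt_id' z).fun_mul (((hu' z).hasDerivAt.fun_mul (hv z).hasDerivAt).fun_sub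
      ((hu z).hasDerivAt.fun_mul (hv' z).hasDerivAt))).congr_deriv ?_
    ring
  have hF_cont : Continuous (deriv fun z => z * (deriv u z * v z - u z * deriv v z)) :=
    (Differentiable.deriv fun z => (hF z).differentiableAt).continuous
  have hG_cont : Continuous fun z => (b - a) * z * u z * v z :=
    ((continuous_const.mul continuous_id).mul hu.continuous).mul hv.continuous
  -- Eliminating `u''` and `v''` costs a division by `z`; the point `z = 0` follows by continuity.
  refine Continuous.ext_on (dense_compl_singleton 0) hF_cont hG_cont fun z hz => ?_
  rw [(hF z).deriv]
  apply mul_left_cancel₀ (show z ≠ 0 from hz)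
  linear_combination v z * hu_sol z - u z * hv_sol z

lemma deriv_deriv_mul_of_eq_zero {f g : ℂ → ℂ} {z : ℂ} (hf : Differentiable ℂ f)
    (hg : Differentiable ℂ g) (hfz : f z = 0) (hgz : g z = 0) :
    deriv (deriv fun w => f w * g w) z = 2 * deriv f z * deriv g z := by
  have h : deriv (fun w => f w * g w) = fun w => deriv f w * g w + f w * deriv g w :=
    funext fun w => deriv_fun_mul (hf w) (hg w)
  rw [h, (((hf.deriv z).hasDerivAt.fun_mul (hg z).hasDerivAt).fun_add
    ((hf z).hasDerivAt.fun_mul (hg.deriv z).hasDerivAt)).deriv, hfz, hgz]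
  ring

lemma Fp_eq_mul_wronskian (p : ℕ) (n : ℝ) :
    (fun κ => Fp p κ n) = fun κ => κ * (deriv (besselJ p) κ * besselJ p (Real.sqrt n * κ)
      - besselJ p κ * deriv (fun κ => besselJ p (Real.sqrt n * κ)) κ) := by
  funext κ
  rw [Fp, deriv_comp_mul_left, smul_eq_mul]
  simp only [besselJ']
  ring

/-- `κ*` is a zero of order exactly 3 of `κ ↦ F_p(κ, n*)`. -/
theorem stmt_13 (p : ℕ) (nst : ℝ) (hnst : 0 < nst) (hnst1 : nst ≠ 1)
    (κs : ℂ) (hκs : κs ≠ 0)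
    (hJ : besselJ p κs = 0) (hJn : besselJ p ((Real.sqrt nst : ℂ) * κs) = 0)
    (hJ' : besselJ' p κs ≠ 0) (hJn' : besselJ' p ((Real.sqrt nst : ℂ) * κs) ≠ 0) :
    Fp p κs nst = 0 ∧
    iteratedDeriv 1 (fun κ : ℂ => Fp p κ nst) κs = 0 ∧
    iteratedDeriv 2 (fun κ : ℂ => Fp p κ nst) κs = 0 ∧
    iteratedDeriv 3 (fun κ : ℂ => Fp p κ nst) κs
      = 2 * ((nst : ℂ) - 1) * (Real.sqrt nst : ℂ) * κs
          * besselJ' p κs * besselJ' p ((Real.sqrt nst : ℂ) * κs) ∧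
    2 * ((nst : ℂ) - 1) * (Real.sqrt nst : ℂ) * κs
          * besselJ' p κs * besselJ' p ((Real.sqrt nst : ℂ) * κs) ≠ 0 := by
  set s : ℂ := (Real.sqrt nst : ℂ) with hs
  have hs2 : s ^ 2 = nst := by rw [hs, ← ofReal_pow, Real.sq_sqrt hnst.le]
  have hs0 : s ≠ 0 := ofReal_ne_zero.mpr (Real.sqrt_ne_zero'.mpr hnst)
  have hu := differentiable_besselJ p
  have hv : Differentiable ℂ fun κ => besselJ p (s * κ) := hu.comp (differentiable_id.const_mul s)
  have hv' (κ : ℂ) : deriv (fun κ => besselJ p (s * κ)) κ = s * besselJ' p (s * κ) :=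
    deriv_comp_mul_left s (besselJ p) κ
  have hF := Fp_eq_mul_wronskian p nst
  rw [← hs] at hF
  have hF' : deriv (fun κ => Fp p κ nst)
      = fun κ => ((nst : ℂ) - 1) * κ * besselJ p κ * besselJ p (s * κ) := by
    rw [hF, deriv_mul_wronskian_of_isBesselSolution hu hv (isBesselSolution_besselJ p)
      ((isBesselSolution_besselJ p).comp_mul_left s), hs2, mul_one]
  have hf : Differentiable ℂ fun κ => ((nst : ℂ) - 1) * κ * besselJ p κ := by fun_prop
  refine ⟨by simp [congrFun hF κs, hJ, hJn], ?_, ?_, ?_, ?_⟩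
  · simp [iteratedDeriv_one, hF', hJ]
  · rw [iteratedDeriv_succ, iteratedDeriv_one, hF', deriv_fun_mul (hf κs) (hv κs)]
    simp [hJ, hJn]
  · rw [iteratedDeriv_succ, iteratedDeriv_succ, iteratedDeriv_one, hF',
      deriv_deriv_mul_of_eq_zero hf hv (by simp [hJ]) hJn, hv']
    rw [(((hasDerivAt_id' κs).const_mul ((nst : ℂ) - 1)).fun_mul (hu κs).hasDerivAt).deriv,
      hJ]
    simp only [besselJ']
    ring
  · have : (nst : ℂ) - 1 ≠ 0 := sub_ne_zero.mpr (by exact_mod_cast hnst1)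
    exact mul_ne_zero (mul_ne_zero (mul_ne_zero (mul_ne_zero (mul_ne_zero two_ne_zero this) hs0)
      hκs) hJ') hJn'
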